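/- Let α be a nonempty finite type with Fintype.card α = n, f : α → α, x : α, and g : α → ℕ with g a ≤ g (f a) ≤ g a + 1 for all a. If g (f^[j] x) = g x for all j ≤ n, then g (f^[k] x) = g x for all k. -/
import Mathlib


theorem no_move_in_n_steps_never_moves {α : Type*} [Fintype α] [Nonempty α] (n : ℕ)
    (hn : Fintype.card α = n) (f : α → α) (x : α) (g : α → ℕ)
    (hg₁ : ∀ a : α, g a ≤ g (f a)) (hg₂ : ∀ a : α, g (f a) ≤ g a + 1)
    (hstall : ∀ j ≤ n, g (f^[j] x) = g x) :
    ∀ k, g (f^[k] x) = g x := by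
  -- pigeonhole: two equal iterates among the first n+1
  obtain ⟨a, ha, b, hb, hab, heq⟩ :
      ∃ a ∈ Finset.range (n + 1), ∃ b ∈ Finset.range (n + 1), a ≠ b ∧ f^[a] x = f^[b] x := by
    apply Finset.exists_ne_map_eq_of_card_lt_of_maps_to (t := Finset.univ)
    · simp [hn]
    · intro i _; exact Finset.mem_univ _
  obtain ⟨i, j, hij, hjn, hper⟩ : ∃ i j, i < j ∧ j ≤ n ∧ f^[i] x = f^[j] x := by
    rcases hab.lt_or_gt with h | h
    · exact ⟨a, b, h, Nat.lt_succ_iff.mp (Finset.mem_range.mp hb), heq⟩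
    · exact ⟨b, a, h, Nat.lt_succ_iff.mp (Finset.mem_range.mp ha), heq.symm⟩
  have key : ∀ t, i ≤ t → f^[t + (j - i)] x = f^[t] x := by
    intro t ht
    have h1 : t + (j - i) = (t - i) + j := by omega
    have h2 : t = (t - i) + i := by omega
    rw [h1, Function.iterate_add_apply, ← hper, ← Function.iterate_add_apply, ← h2]
  intro k
  induction k using Nat.strong_induction_on with
  | _ k ih =>
    rcases le_or_gt k n with hkn | hkn
    · exact hstall k hkn
    · have h1 : i ≤ k - (j - i) := by omega
      have h2 : k = (k - (j - i)) + (j - i) := by omega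
      rw [h2, key _ h1]
      exact ih _ (by omega)
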